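/- arXiv:2603.01995 — 2 statements merged into one kernel-verified Lean document; each statement's English description precedes it below -/
import Mathlib

section
/- Let (A_1, …, A_N) be a Clifford system on ℝ^m with N ≥ 1, P_i(x) = ⟨x, A_i x⟩, and let e(x) := Σ_{i=1}^N ‖∇P_i(x)‖² (the squared Hilbert–Schmidt norm of the differential of P = (P_1,…,P_N)). Then e(x) = 4N‖x‖² and, for every i ∈ {1,…,N} and every x ∈ ℝ^m, ⟨∇P_i(x), ∇e(x)⟩ = 16N·P_i(x). In particular, the map P is umbillic: dP(∇‖dP‖²(x)) = 16N·P(x) for all x. -/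
open RealInnerProductSpace

/-- The quadratic form `P(x) = ⟨x, A x⟩` associated to an `m × m` real matrix `A`. -/
noncomputable def quadForm {m : ℕ} (A : Matrix (Fin m) (Fin m) ℝ)
    (x : EuclideanSpace ℝ (Fin m)) : ℝ :=
  ⟪x, Matrix.toEuclideanLin A x⟫

/-- A Clifford system on `ℝ^m`. -/
def IsCliffordSystem {m N : ℕ} (A : Fin N → Matrix (Fin m) (Fin m) ℝ) : Prop :=
  (∀ i, (A i).IsSymm) ∧
    ∀ i j, A i * A j + A j * A i
      = (if i = j then (2 : ℝ) else 0) • (1 : Matrix (Fin m) (Fin m) ℝ)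

/-! Each `A_i` is symmetric with `A_i² = 1`, hence orthogonal, so `∇P_i(x) = 2 A_i x` has norm
`2‖x‖`. Thus `e = 4N‖·‖²` is radial with `∇e(x) = 8N x`, and
`⟨2 A_i x, 8N x⟩ = 16N ⟨x, A_i x⟩`. -/

section InnerProductSpace

variable {E : Type*} [NormedAddCommGroup E] [InnerProductSpace ℝ E] [CompleteSpace E]

theorem HasGradientAt.const_mul {f : E → ℝ} {f' x : E} (h : HasGradientAt f f' x) (c : ℝ) :
    HasGradientAt (fun y => c * f y) (c • f') x := by
  rw [hasGradientAt_iff_hasFDerivAt, map_smul]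
  exact h.hasFDerivAt.const_mul c

theorem hasGradientAt_norm_sq (x : E) : HasGradientAt (fun y => ‖y‖ ^ 2) ((2 : ℝ) • x) x := by
  rw [hasGradientAt_iff_hasFDerivAt]
  refine (hasStrictFDerivAt_norm_sq x).hasFDerivAt.congr_fderiv ?_
  ext y
  simp [two_mul]

variable {T : E →L[ℝ] E}

theorem IsSelfAdjoint.hasGradientAt_inner_self_apply (hT : IsSelfAdjoint T) (x : E) :
    HasGradientAt (fun y => ⟪y, T y⟫) ((2 : ℝ) • T x) x := by
  rw [hasGradientAt_iff_hasFDerivAt]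
  refine ((hasFDerivAt_id x).inner ℝ T.hasFDerivAt).congr_fderiv ?_
  ext y
  have hsymm : ⟪x, T y⟫ = ⟪T x, y⟫ := (hT.isSymmetric x y).symm
  simp [hsymm, real_inner_comm y, two_mul]

theorem IsSelfAdjoint.norm_apply_of_mul_self_eq_one (hT : IsSelfAdjoint T) (hT₂ : T * T = 1)
    (x : E) : ‖T x‖ = ‖x‖ := by
  refine T.norm_map_iff_adjoint_comp_self.mpr ?_ x
  rwa [ContinuousLinearMap.isSelfAdjoint_iff'.mp hT]

end InnerProductSpace

theorem Matrix.IsSymm.isSelfAdjoint_toEuclideanCLM {m : ℕ} {A : Matrix (Fin m) (Fin m) ℝ}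
    (hA : A.IsSymm) : IsSelfAdjoint (Matrix.toEuclideanCLM (𝕜 := ℝ) A) :=
  (Matrix.isHermitian_iff_isSymm.mpr hA).isSelfAdjoint.map _

theorem Matrix.IsSymm.hasGradientAt_quadForm {m : ℕ} {A : Matrix (Fin m) (Fin m) ℝ}
    (hA : A.IsSymm) (x : EuclideanSpace ℝ (Fin m)) :
    HasGradientAt (quadForm A) ((2 : ℝ) • Matrix.toEuclideanLin A x) x :=
  hA.isSelfAdjoint_toEuclideanCLM.hasGradientAt_inner_self_apply x

namespace IsCliffordSystem

variable {m N : ℕ} {A : Fin N → Matrix (Fin m) (Fin m) ℝ}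

theorem mul_self (hA : IsCliffordSystem A) (i : Fin N) : A i * A i = 1 := by
  have h := hA.2 i i
  rw [if_pos rfl, ← two_smul ℝ (A i * A i)] at h
  exact smul_right_injective _ two_ne_zero h

theorem norm_toEuclideanLin_apply (hA : IsCliffordSystem A) (i : Fin N)
    (x : EuclideanSpace ℝ (Fin m)) : ‖Matrix.toEuclideanLin (A i) x‖ = ‖x‖ := by
  refine (hA.1 i).isSelfAdjoint_toEuclideanCLM.norm_apply_of_mul_self_eq_one ?_ x
  rw [← map_mul, hA.mul_self, map_one]

theorem gradient_quadForm (hA : IsCliffordSystem A) (i : Fin N) (x : EuclideanSpace ℝ (Fin m)) :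
    gradient (quadForm (A i)) x = (2 : ℝ) • Matrix.toEuclideanLin (A i) x :=
  ((hA.1 i).hasGradientAt_quadForm x).gradient

theorem sum_norm_gradient_quadForm_sq (hA : IsCliffordSystem A) (x : EuclideanSpace ℝ (Fin m)) :
    ∑ i : Fin N, ‖gradient (quadForm (A i)) x‖ ^ 2 = 4 * N * ‖x‖ ^ 2 := by
  simp only [hA.gradient_quadForm, norm_smul, hA.norm_toEuclideanLin_apply, Finset.sum_const,
    Finset.card_univ, Fintype.card_fin, nsmul_eq_mul, Real.norm_two]
  ring

end IsCliffordSystem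

theorem clifford_quadratic_map_umbillic_general {m N : ℕ}
    (A : Fin N → Matrix (Fin m) (Fin m) ℝ) (hA : IsCliffordSystem A)
    (e : EuclideanSpace ℝ (Fin m) → ℝ)
    (he : ∀ x, e x = ∑ i : Fin N, ‖gradient (quadForm (A i)) x‖ ^ 2) :
    ∀ x : EuclideanSpace ℝ (Fin m),
      e x = 4 * N * ‖x‖ ^ 2 ∧
      ∀ i : Fin N,
        ⟪gradient (quadForm (A i)) x, gradient e x⟫ = 16 * N * quadForm (A i) x := by
  have he_eq : e = fun y => 4 * N * ‖y‖ ^ 2 :=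
    funext fun y => (he y).trans (hA.sum_norm_gradient_quadForm_sq y)
  intro x
  refine ⟨congrFun he_eq x, fun i => ?_⟩
  have hge : gradient e x = (4 * N : ℝ) • (2 : ℝ) • x := by
    rw [he_eq]
    exact ((hasGradientAt_norm_sq x).const_mul _).gradient
  rw [hge, hA.gradient_quadForm, inner_smul_left, inner_smul_right, inner_smul_right,
    quadForm, real_inner_comm]
  simp only [RCLike.conj_to_real]
  ring

/-- For a Clifford system `(A_1, …, A_N)` on `ℝ^m` (`N ≥ 1`) with
quadratic forms `P_i(x) = ⟨x, A_i x⟩` and energy density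
`e(x) = Σ_i ‖∇P_i(x)‖² = ‖dP‖²(x)`, one has `e(x) = 4N‖x‖²` and
`⟨∇P_i(x), ∇e(x)⟩ = 16N·P_i(x)` for all `i` and `x`; i.e. the map `P` is umbillic with
`dP(∇‖dP‖²(x)) = 16N·P(x)`. -/
theorem clifford_quadratic_map_umbillic {m N : ℕ} (hN : 1 ≤ N)
    (A : Fin N → Matrix (Fin m) (Fin m) ℝ) (hA : IsCliffordSystem A)
    (e : EuclideanSpace ℝ (Fin m) → ℝ)
    (he : ∀ x, e x = ∑ i : Fin N, ‖gradient (quadForm (A i)) x‖ ^ 2) :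
    ∀ x : EuclideanSpace ℝ (Fin m),
      e x = 4 * N * ‖x‖ ^ 2 ∧
      ∀ i : Fin N,
        ⟪gradient (quadForm (A i)) x, gradient e x⟫ = 16 * N * quadForm (A i) x :=
  clifford_quadratic_map_umbillic_general A hA e he
end

section
/- Let n ≥ 1 and let (A_1, …, A_{2n}) be a Clifford system on ℝ^m. Then for all x ∈ ℝ^m: Δq(x) = 16 n ‖x‖², where q(x) = Σ_{i=1}^{2n} ⟨x,A_ix⟩². -/
/-!
For `P(x) = ⟨x, A x⟩` with `A` symmetric, `∇P = 2 A x` and `∇²P = 2 A`, so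
`Δ(P²) = 2 ‖∇P‖² + 2 P ΔP = 8 ‖A x‖² + 4 P(x) tr A`. In a Clifford system each `A_i` is
symmetric with `A_i² = 1`, hence an isometry, and anticommuting with another `A_j` (one exists,
the number `2n` of matrices being even) forces `tr A_i = tr (A_j A_i A_j) = -tr A_i = 0`.
So each of the `2n` squares contributes `8 ‖x‖²`.
-/

open RealInnerProductSpace

/-- For a Clifford system `(A_1, …, A_{2n})` on `ℝ^m`, the degree-4 polynomial
`u(x) = Σ_{i=1}^n ⟨x, A_i x⟩² − Σ_{i=1}^n ⟨x, A_{n+i} x⟩²`. -/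
noncomputable def cliffU {m n : ℕ} (A : Fin (n + n) → Matrix (Fin m) (Fin m) ℝ)
    (x : EuclideanSpace ℝ (Fin m)) : ℝ :=
  ∑ i : Fin n, (quadForm (A (Fin.castAdd n i)) x) ^ 2
    - ∑ i : Fin n, (quadForm (A (Fin.natAdd n i)) x) ^ 2

/-- For a Clifford system `(A_1, …, A_{2n})` on `ℝ^m`, the degree-4 polynomial
`q(x) = Σ_{i=1}^{2n} ⟨x, A_i x⟩² = ‖P(x)‖²`. -/
noncomputable def cliffQ {m n : ℕ} (A : Fin (n + n) → Matrix (Fin m) (Fin m) ℝ)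
    (x : EuclideanSpace ℝ (Fin m)) : ℝ :=
  ∑ i : Fin (n + n), (quadForm (A i) x) ^ 2

/-- The Euclidean Laplacian `Δf(x) = Σ_i ∂²f/∂x_i²(x)` on `ℝ^m`. -/
noncomputable def laplacian {m : ℕ} (f : EuclideanSpace ℝ (Fin m) → ℝ)
    (x : EuclideanSpace ℝ (Fin m)) : ℝ :=
  ∑ i, fderiv ℝ (fun y => fderiv ℝ f y (EuclideanSpace.single i 1)) x
    (EuclideanSpace.single i 1)

namespace LinearMap.IsSymmetric

variable {F : Type*} [NormedAddCommGroup F] [InnerProductSpace ℝ F] {T : F →L[ℝ] F}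

theorem hasFDerivAt_inner_self_apply (hT : (T : F →ₗ[ℝ] F).IsSymmetric) (x : F) :
    HasFDerivAt (fun y => ⟪y, T y⟫) (2 • innerSL ℝ (T x)) x := by
  convert (hT.hasStrictFDerivAt_reApplyInnerSelf x).hasFDerivAt using 2 with y
  rw [T.reApplyInnerSelf_apply, RCLike.re_to_real, real_inner_comm]

theorem fderiv_sq_inner_self_apply (hT : (T : F →ₗ[ℝ] F).IsSymmetric) (x v : F) :
    fderiv ℝ (fun y => ⟪y, T y⟫ ^ 2) x v = 4 * ⟪x, T x⟫ * ⟪T x, v⟫ := by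
  rw [((hT.hasFDerivAt_inner_self_apply x).pow 2).fderiv]
  simp only [Nat.add_one_sub_one, pow_one, nsmul_eq_mul, Nat.cast_ofNat, _root_.smul_apply,
    coe_innerSL_apply, smul_eq_mul]
  ring

theorem fderiv_fderiv_sq_inner_self_apply (hT : (T : F →ₗ[ℝ] F).IsSymmetric) (x v : F) :
    fderiv ℝ (fun y => fderiv ℝ (fun z => ⟪z, T z⟫ ^ 2) y v) x v
      = 8 * ⟪T x, v⟫ ^ 2 + 4 * ⟪x, T x⟫ * ⟪T v, v⟫ := by
  simp_rw [hT.fderiv_sq_inner_self_apply]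
  have hTv : HasFDerivAt (fun y => ⟪T y, v⟫) ((innerSL ℝ v).comp T) x := by
    convert ((innerSL ℝ v).comp T).hasFDerivAt (x := x) using 1
    ext y
    exact real_inner_comm v (T y)
  rw [(((hT.hasFDerivAt_inner_self_apply x).const_mul 4).fun_mul hTv).fderiv]
  simp only [_root_.add_apply, _root_.smul_apply, ContinuousLinearMap.comp_apply,
    coe_innerSL_apply, smul_eq_mul, nsmul_eq_mul, Nat.cast_ofNat]
  rw [real_inner_comm v (T v)]
  ring

end LinearMap.IsSymmetric

theorem Matrix.IsSymm.isSymmetric_toEuclideanLin {ι : Type*} [Fintype ι] [DecidableEq ι]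
    {A : Matrix ι ι ℝ} (hA : A.IsSymm) : (Matrix.toEuclideanLin A).IsSymmetric :=
  Matrix.isSymmetric_toEuclideanLin_iff.2 (Matrix.isHermitian_iff_isSymm.2 hA)

theorem Matrix.IsSymm.norm_toEuclideanLin_of_mul_self {ι : Type*} [Fintype ι] [DecidableEq ι]
    {A : Matrix ι ι ℝ} (hA : A.IsSymm) (hAA : A * A = 1) (x : EuclideanSpace ℝ ι) :
    ‖Matrix.toEuclideanLin A x‖ = ‖x‖ := by
  have hT := hA.isSymmetric_toEuclideanLin
  have hTT : Matrix.toEuclideanLin A (Matrix.toEuclideanLin A x) = x := by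
    simp [Matrix.toLpLin_apply, Matrix.mulVec_mulVec, hAA]
  rw [← sq_eq_sq₀ (norm_nonneg _) (norm_nonneg _), ← real_inner_self_eq_norm_sq,
    ← real_inner_self_eq_norm_sq, hT, hTT]

section Laplacian

variable {m : ℕ}

theorem contDiff_quadForm (A : Matrix (Fin m) (Fin m) ℝ) {k : WithTop ℕ∞} :
    ContDiff ℝ k (quadForm A) :=
  contDiff_id.inner ℝ (Matrix.toEuclideanCLM (𝕜 := ℝ) A).contDiff

theorem laplacian_sum {ι : Type*} (s : Finset ι) {f : ι → EuclideanSpace ℝ (Fin m) → ℝ}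
    (hf : ∀ i ∈ s, ContDiff ℝ 2 (f i)) (x : EuclideanSpace ℝ (Fin m)) :
    laplacian (fun y => ∑ i ∈ s, f i y) x = ∑ i ∈ s, laplacian (f i) x := by
  unfold laplacian
  rw [Finset.sum_comm]
  refine Finset.sum_congr rfl fun j _ => ?_
  set e := EuclideanSpace.single j (1 : ℝ)
  have hdiff : ∀ i ∈ s, Differentiable ℝ (fun y => fderiv ℝ (f i) y e) := fun i hi =>
    (((hf i hi).fderiv_right (m := 1) (by norm_num)).clm_apply contDiff_const).differentiable
      (by norm_num)
  have hfirst : (fun y => fderiv ℝ (fun z => ∑ i ∈ s, f i z) y e)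
      = fun y => ∑ i ∈ s, fderiv ℝ (f i) y e := by
    ext y
    rw [fderiv_fun_sum fun i hi => ((hf i hi).differentiable (by norm_num)) y,
      _root_.sum_apply]
  rw [hfirst, fderiv_fun_sum fun i hi => hdiff i hi x, _root_.sum_apply]

theorem Matrix.IsSymm.laplacian_sq_quadForm {A : Matrix (Fin m) (Fin m) ℝ} (hA : A.IsSymm)
    (x : EuclideanSpace ℝ (Fin m)) :
    laplacian (fun y => quadForm A y ^ 2) x
      = 8 * ‖Matrix.toEuclideanLin A x‖ ^ 2 + 4 * quadForm A x * A.trace := by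
  let T : EuclideanSpace ℝ (Fin m) →L[ℝ] EuclideanSpace ℝ (Fin m) :=
    Matrix.toEuclideanCLM (𝕜 := ℝ) A
  have hT : (T : EuclideanSpace ℝ (Fin m) →ₗ[ℝ] EuclideanSpace ℝ (Fin m)).IsSymmetric :=
    Matrix.coe_toEuclideanCLM_eq_toEuclideanLin A ▸ hA.isSymmetric_toEuclideanLin
  have hq : ∀ y, quadForm A y = ⟪y, T y⟫ := fun y => rfl
  unfold laplacian
  simp_rw [hq, hT.fderiv_fderiv_sq_inner_self_apply, Finset.sum_add_distrib, ← Finset.mul_sum]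
  have hnorm :
      ∑ i, ⟪T x, EuclideanSpace.single i 1⟫ ^ 2 = ‖Matrix.toEuclideanLin A x‖ ^ 2 := by
    simp [EuclideanSpace.real_norm_sq_eq, EuclideanSpace.inner_single_right, T]
  have htrace :
      ∑ i, ⟪T (EuclideanSpace.single i 1), EuclideanSpace.single i 1⟫ = A.trace := by
    simp [Matrix.trace, EuclideanSpace.inner_single_right, T]
  rw [hnorm, htrace]

end Laplacian

namespace IsCliffordSystem

variable {m N : ℕ} {A : Fin N → Matrix (Fin m) (Fin m) ℝ}

theorem trace_eq_zero (hA : IsCliffordSystem A) {i j : Fin N} (hij : i ≠ j) :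
    (A i).trace = 0 := by
  have hji : A j * A i = -(A i * A j) := by
    rw [eq_neg_iff_add_eq_zero, add_comm, hA.2 i j, if_neg hij, zero_smul]
  have key : (A i).trace = -(A i).trace :=
    calc (A i).trace = (A i * A j * A j).trace := by rw [mul_assoc, hA.mul_self, mul_one]
    _ = (A j * A i * A j).trace := by rw [Matrix.trace_mul_comm, mul_assoc]
    _ = -(A i).trace := by rw [hji, neg_mul, Matrix.trace_neg, mul_assoc, hA.mul_self, mul_one]
  linarith

theorem laplacian_sq_quadForm (hA : IsCliffordSystem A) {i j : Fin N} (hij : i ≠ j)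
    (x : EuclideanSpace ℝ (Fin m)) :
    laplacian (fun y => quadForm (A i) y ^ 2) x = 8 * ‖x‖ ^ 2 := by
  rw [(hA.1 i).laplacian_sq_quadForm, (hA.1 i).norm_toEuclideanLin_of_mul_self (hA.mul_self i),
    hA.trace_eq_zero hij, mul_zero, add_zero]

end IsCliffordSystem

theorem laplacian_q_general {m n : ℕ}
    (A : Fin (n + n) → Matrix (Fin m) (Fin m) ℝ) (hA : IsCliffordSystem A) :
    ∀ x : EuclideanSpace ℝ (Fin m), laplacian (cliffQ A) x = 16 * n * ‖x‖ ^ 2 := by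
  intro x
  have hterm (i : Fin (n + n)) : laplacian (fun y => quadForm (A i) y ^ 2) x = 8 * ‖x‖ ^ 2 := by
    have : Nontrivial (Fin (n + n)) := Fin.nontrivial_iff_two_le.2 (by have := i.pos; omega)
    obtain ⟨j, hij⟩ := exists_ne i
    exact hA.laplacian_sq_quadForm hij.symm x
  calc laplacian (cliffQ A) x = ∑ i, laplacian (fun y => quadForm (A i) y ^ 2) x :=
        laplacian_sum _ (fun i _ => (contDiff_quadForm (A i)).pow 2) x
    _ = 16 * n * ‖x‖ ^ 2 := by
      simp only [hterm, Finset.sum_const, Finset.card_univ, Fintype.card_fin, nsmul_eq_mul]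
      push_cast
      ring

/-- For a Clifford system `(A_1, …, A_{2n})` on `ℝ^m` (`n ≥ 1`):
`Δq(x) = 16 n ‖x‖²` for all `x ∈ ℝ^m`. -/
theorem laplacian_q {m n : ℕ} (hn : 1 ≤ n)
    (A : Fin (n + n) → Matrix (Fin m) (Fin m) ℝ) (hA : IsCliffordSystem A) :
    ∀ x : EuclideanSpace ℝ (Fin m), laplacian (cliffQ A) x = 16 * n * ‖x‖ ^ 2 :=
  laplacian_q_general A hA
end
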